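/- Let η ∈ C¹([1,∞); ℝ^N) solve η̇_i(t) = (γ/(2s)) Σ_{j≠i} (η_i(t) - η_j(t))/|η_i(t) - η_j(t)|^{1+2s} for t > 1 with η_1(1) < η_2(1) < ... < η_N(1). Then η_1(t) < η_2(t) < ... < η_N(t) for all t ≥ 1, and there exists C ≥ 1 (depending on s, N, γ, and η(1)) such that (1/C) t^{1/(1+2s)} ≤ η_{i+1}(t) - η_i(t) ≤ C t^{1/(1+2s)} for all t ≥ 1 and i = 1,...,N-1. -/

import Mathlib

open Real Finset

noncomputable def Fn (s y : ℝ) : ℝ := y / |y| ^ (1 + 2*s)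

lemma Fn_zero (s : ℝ) : Fn s 0 = 0 := by simp [Fn]

lemma Fn_pos (s : ℝ) {y : ℝ} (hy : 0 < y) : Fn s y = y ^ (-(2*s)) := by
  have h : -(2*s) = 1 - (1+2*s) := by ring
  rw [Fn, abs_of_pos hy, h, Real.rpow_sub hy, Real.rpow_one]

lemma Fn_neg (s : ℝ) {y : ℝ} (hy : 0 < y) : Fn s (-y) = -(y ^ (-(2*s))) := by
  have h : -(2*s) = 1 - (1+2*s) := by ring
  rw [Fn, abs_neg, abs_of_pos hy, neg_div, h, Real.rpow_sub hy, Real.rpow_one]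

lemma gap_convex (s : ℝ) (hs : 0 < s) {g A B : ℝ} (hg : 0 < g) (hB : 0 < B) (hBA : B ≤ A) :
    (B + g) ^ (-(2*s)) - B ^ (-(2*s)) ≤ (A + g) ^ (-(2*s)) - A ^ (-(2*s)) := by
  set ψ : ℝ → ℝ := fun x => x ^ (-(2*s)) - (x + g) ^ (-(2*s)) with hψ
  have key : ∀ x ∈ Set.Ici B, HasDerivAt ψ
      ((-(2*s)) * x ^ (-(2*s)-1) - 1 * (-(2*s)) * (x+g) ^ (-(2*s)-1)) x := by
    intro x hx
    have hx0 : 0 < x := lt_of_lt_of_le hB hx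
    have h1 : HasDerivAt (fun x : ℝ => x ^ (-(2*s))) ((-(2*s)) * x ^ (-(2*s)-1)) x :=
      Real.hasDerivAt_rpow_const (Or.inl hx0.ne')
    have h2 : HasDerivAt (fun x : ℝ => (x + g) ^ (-(2*s)))
        (1 * (-(2*s)) * (x+g) ^ (-(2*s)-1)) x :=
      ((hasDerivAt_id x).add_const g).rpow_const (Or.inl (by positivity))
    exact h1.sub h2
  have hanti : AntitoneOn ψ (Set.Ici B) := by
    apply antitoneOn_of_deriv_nonpos (convex_Ici B)
    · exact fun x hx => ((key x hx).continuousAt).continuousWithinAt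
    · intro x hx
      rw [interior_Ici] at hx
      exact ((key x (Set.Ioi_subset_Ici_self hx)).differentiableAt).differentiableWithinAt
    · intro x hx
      rw [interior_Ici] at hx
      rw [(key x (Set.Ioi_subset_Ici_self hx)).deriv]
      have hx0 : 0 < x := hB.trans hx
      have hle : (x+g) ^ (-(2*s)-1) ≤ x ^ (-(2*s)-1) :=
        Real.rpow_le_rpow_of_nonpos hx0 (by linarith) (by linarith)
      nlinarith [Real.rpow_pos_of_pos hx0 (-(2*s)-1)]
  have h := hanti (Set.mem_Ici.2 le_rfl) (Set.mem_Ici.2 hBA) hBA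
  simp only [hψ] at h
  linarith

lemma chain {N : ℕ} (x : ℕ → ℝ) {g : ℝ} (hg : 0 ≤ g)
    (hgap : ∀ k : ℕ, k + 1 < N → g ≤ x (k+1) - x k) :
    ∀ j, j < N → ∀ i, i ≤ j → ((j - i : ℕ) : ℝ) * g ≤ x j - x i := by
  intro j
  induction j with
  | zero =>
    intro _ i hi
    interval_cases i
    simp
  | succ n ih =>
    intro hj i hi
    rcases Nat.lt_or_ge i (n+1) with h | h
    · have h1 := ih (by omega) i (by omega)
      have h2 := hgap n hj
      have h3 : ((n + 1 - i : ℕ) : ℝ) = ((n - i : ℕ) : ℝ) + 1 := by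
        have : n + 1 - i = (n - i) + 1 := by omega
        rw [this]; push_cast; ring
      rw [h3]; linarith
    · have : i = n + 1 := by omega
      subst this
      simp

lemma core_sum {N : ℕ} {s : ℝ} (hs : 0 < s) (x : ℕ → ℝ) {g : ℝ} (hg : 0 < g)
    {p : ℕ} (hp : p + 1 < N)
    (hgap : ∀ k : ℕ, k + 1 < N → g ≤ x (k+1) - x k)
    (heq : x (p+1) - x p = g) :
    2 * (N:ℝ)^(-(2*s)) * g^(-(2*s)) ≤
      ∑ k ∈ range N, (Fn s (x (p+1) - x k) - Fn s (x p - x k)) := by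
  have hchain := chain x hg.le hgap
  have hzr : (0:ℝ) ^ (-(2*s)) = 0 := Real.zero_rpow (by intro h; nlinarith)
  set G : ℕ → ℝ := fun d => (d:ℝ) ^ (-(2*s)) with hG
  set Lc : ℕ → ℝ := fun k =>
    if k ≤ p then G (p - k + 1) - G (p - k) else G (k - p) - G (k - p - 1) with hLc
  have key : ∀ k ∈ range N,
      g^(-(2*s)) * Lc k ≤ Fn s (x (p+1) - x k) - Fn s (x p - x k) := by
    intro k hk
    rw [mem_range] at hk
    rcases lt_trichotomy k p with hkp | hkp | hkp
    · -- k < p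
      have hd1 : 1 ≤ p - k := by omega
      have hdR : (1:ℝ) ≤ ((p-k:ℕ):ℝ) := by exact_mod_cast hd1
      have hA : ((p-k:ℕ):ℝ) * g ≤ x p - x k := hchain p (by omega) k (by omega)
      have hApos : 0 < x p - x k := by nlinarith
      have hx1 : x (p+1) - x k = (x p - x k) + g := by linarith
      have hBpos : (0:ℝ) < ((p-k:ℕ):ℝ) * g := by nlinarith
      have hcv := gap_convex s hs hg hBpos hA
      rw [hx1, Fn_pos s (by linarith), Fn_pos s hApos]
      have e1 : (((p-k:ℕ):ℝ) * g + g) = ((p-k+1:ℕ):ℝ) * g := by push_cast; ring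
      have e2 : (((p-k:ℕ):ℝ) * g) ^ (-(2*s)) = G (p-k) * g ^ (-(2*s)) := by
        rw [hG, ← Real.mul_rpow (by positivity) hg.le]
      have e3 : (((p-k+1:ℕ):ℝ) * g) ^ (-(2*s)) = G (p-k+1) * g ^ (-(2*s)) := by
        rw [hG, ← Real.mul_rpow (by positivity) hg.le]
      rw [e1, e3, e2] at hcv
      have hLck : Lc k = G (p - k + 1) - G (p - k) := by
        rw [hLc]; simp only [if_pos (le_of_lt hkp)]
      rw [hLck]
      calc g ^ (-(2*s)) * (G (p-k+1) - G (p-k))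
          = G (p-k+1) * g ^ (-(2*s)) - G (p-k) * g ^ (-(2*s)) := by ring
        _ ≤ (x p - x k + g) ^ (-(2*s)) - (x p - x k) ^ (-(2*s)) := hcv
    · -- k = p
      subst hkp
      have hLck : Lc k = 1 := by
        rw [hLc]; simp only [if_pos le_rfl, Nat.sub_self]
        rw [hG]; norm_num [hzr, Real.one_rpow]
      rw [hLck, heq, sub_self, Fn_zero, Fn_pos s hg]
      exact le_of_eq (by ring)
    · -- p < k
      have hk1 : p + 1 ≤ k := hkp
      rcases eq_or_lt_of_le hk1 with hk2 | hk2
      · subst hk2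
        have hLck : Lc (p+1) = 1 := by
          rw [hLc]; simp only [if_neg (by omega : ¬ p + 1 ≤ p)]
          have e2 : p + 1 - p - 1 = 0 := by omega
          have e1 : p + 1 - p = 1 := by omega
          rw [hG, e2, e1]
          norm_num [hzr, Real.one_rpow]
        have hxp : x p - x (p+1) = -g := by linarith
        rw [hLck, sub_self, Fn_zero, hxp, Fn_neg s hg]
        exact le_of_eq (by ring)
      · -- p + 1 < k
        have he1 : 1 ≤ k - p - 1 := by omega
        have heR : (1:ℝ) ≤ ((k-p-1:ℕ):ℝ) := by exact_mod_cast he1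
        have hB : ((k-p-1:ℕ):ℝ) * g ≤ x k - x (p+1) := by
          have h0 := hchain k (by omega) (p+1) (by omega)
          have hc : (k - (p+1) : ℕ) = (k-p-1:ℕ) := by omega
          rw [hc] at h0; exact h0
        have hBpos : 0 < x k - x (p+1) := by nlinarith
        have hepos : (0:ℝ) < ((k-p-1:ℕ):ℝ) * g := by nlinarith
        have hcv := gap_convex s hs hg hepos hB
        have hx1 : x (p+1) - x k = -(x k - x (p+1)) := by ring
        have hx2 : x p - x k = -((x k - x (p+1)) + g) := by linarith
        rw [hx1, hx2, Fn_neg s hBpos, Fn_neg s (by linarith)]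
        have e1 : (((k-p-1:ℕ):ℝ) * g + g) = ((k-p-1+1:ℕ):ℝ) * g := by push_cast; ring
        have e2 : (((k-p-1:ℕ):ℝ) * g) ^ (-(2*s)) = G (k-p-1) * g ^ (-(2*s)) := by
          rw [hG, ← Real.mul_rpow (by positivity) hg.le]
        have e3 : (((k-p-1+1:ℕ):ℝ) * g) ^ (-(2*s)) = G (k-p-1+1) * g ^ (-(2*s)) := by
          rw [hG, ← Real.mul_rpow (by positivity) hg.le]
        rw [e1, e3, e2] at hcv
        have hLck : Lc k = G (k-p-1+1) - G (k-p-1) := by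
          rw [hLc]; simp only [if_neg (by omega : ¬ k ≤ p)]
          have hc1 : G (k - p) = G (k - p - 1 + 1) := by congr 1; omega
          rw [hc1]
        rw [hLck]
        calc g ^ (-(2*s)) * (G (k-p-1+1) - G (k-p-1))
            = G (k-p-1+1) * g ^ (-(2*s)) - G (k-p-1) * g ^ (-(2*s)) := by ring
          _ ≤ -((x k - x (p+1)) ^ (-(2*s))) - -((x k - x (p+1) + g) ^ (-(2*s))) := by linarith
  have hsum : ∑ k ∈ range N, (g^(-(2*s)) * Lc k)
      = g^(-(2*s)) * ((((p+1:ℕ)):ℝ)^(-(2*s)) + ((N-p-1:ℕ):ℝ)^(-(2*s))) := by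
    rw [← mul_sum]
    congr 1
    rw [range_eq_Ico, ← Finset.sum_Ico_consecutive _ (by omega : 0 ≤ p+1) (by omega : p+1 ≤ N)]
    have h1 : ∑ k ∈ Finset.Ico 0 (p+1), Lc k = G (p+1) := by
      rw [← range_eq_Ico]
      have : ∀ k ∈ range (p+1), Lc k = G (p - k + 1) - G (p - k) := by
        intro k hk
        rw [mem_range] at hk
        rw [hLc]; simp only [if_pos (by omega : k ≤ p)]
      rw [Finset.sum_congr rfl this]
      have hrefl := Finset.sum_range_reflect (fun k => G (p - k + 1) - G (p - k)) (p+1)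
      have hre : ∀ j ∈ range (p+1), G (p - (p + 1 - 1 - j) + 1) - G (p - (p + 1 - 1 - j))
          = G (j+1) - G j := by
        intro j hj
        rw [mem_range] at hj
        congr 2 <;> omega
      rw [← hrefl, Finset.sum_congr rfl hre, Finset.sum_range_sub (fun d => G d)]
      rw [hG]
      simp only [Nat.cast_zero, hzr, sub_zero]
    have h2 : ∑ k ∈ Finset.Ico (p+1) N, Lc k = G (N-p-1) := by
      rw [Finset.sum_Ico_eq_sum_range]
      have : ∀ j ∈ range (N - (p+1)), Lc (p+1+j) = G (j+1) - G j := by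
        intro j hj
        rw [hLc]; simp only [if_neg (by omega : ¬ p+1+j ≤ p)]
        congr 2 <;> omega
      rw [Finset.sum_congr rfl this, Finset.sum_range_sub (fun d => G d)]
      have : N - (p+1) = N - p - 1 := by omega
      rw [this, hG]
      simp only [Nat.cast_zero, hzr, sub_zero]
    rw [h1, h2, hG]
  have hstep := Finset.sum_le_sum key
  rw [hsum] at hstep
  refine le_trans ?_ hstep
  have hb1 : ((N:ℕ):ℝ)^(-(2*s)) ≤ (((p+1:ℕ)):ℝ)^(-(2*s)) := by
    apply Real.rpow_le_rpow_of_nonpos (by positivity) (by exact_mod_cast (by omega : p+1 ≤ N)) (by linarith)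
  have hb2 : ((N:ℕ):ℝ)^(-(2*s)) ≤ ((N-p-1:ℕ):ℝ)^(-(2*s)) := by
    have h01 : (0:ℝ) < ((N-p-1:ℕ):ℝ) := by
      have : 1 ≤ N - p - 1 := by omega
      exact_mod_cast Nat.lt_of_lt_of_le Nat.zero_lt_one this
    apply Real.rpow_le_rpow_of_nonpos h01 (by exact_mod_cast (by omega : N-p-1 ≤ N)) (by linarith)
  have hgp : 0 < g^(-(2*s)) := Real.rpow_pos_of_pos hg _
  nlinarith [hb1, hb2, hgp]

lemma upper_sum {N : ℕ} {s : ℝ} (hs : 0 < s) (x : ℕ → ℝ) {g : ℝ} (hg : 0 < g) (hN : 2 ≤ N)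
    (hgap : ∀ k : ℕ, k + 1 < N → g ≤ x (k+1) - x k) :
    (∑ k ∈ range N, Fn s (x (N-1) - x k)) - (∑ k ∈ range N, Fn s (x 0 - x k))
      ≤ 2 * N * g^(-(2*s)) := by
  have hchain := chain x hg.le hgap
  have hgp : 0 < g^(-(2*s)) := Real.rpow_pos_of_pos hg _
  have h1 : ∑ k ∈ range N, Fn s (x (N-1) - x k) ≤ N * g^(-(2*s)) := by
    calc ∑ k ∈ range N, Fn s (x (N-1) - x k) ≤ ∑ k ∈ range N, g^(-(2*s)) := by
          apply Finset.sum_le_sum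
          intro k hk
          rw [mem_range] at hk
          rcases eq_or_lt_of_le (by omega : k ≤ N - 1) with hk1 | hk1
          · subst hk1; rw [sub_self, Fn_zero]; positivity
          · have hd : (1:ℝ) ≤ ((N-1-k:ℕ):ℝ) := by exact_mod_cast (by omega : 1 ≤ N-1-k)
            have hA := hchain (N-1) (by omega) k (by omega)
            have hApos : 0 < x (N-1) - x k := by nlinarith
            rw [Fn_pos s hApos]
            exact Real.rpow_le_rpow_of_nonpos hg (by nlinarith) (by linarith)
      _ = N * g^(-(2*s)) := by rw [Finset.sum_const, card_range, nsmul_eq_mul]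
  have h2 : -(N * g^(-(2*s))) ≤ ∑ k ∈ range N, Fn s (x 0 - x k) := by
    calc (-(N * g^(-(2*s))) : ℝ) = ∑ k ∈ range N, -(g^(-(2*s))) := by
          rw [Finset.sum_const, card_range, nsmul_eq_mul]; ring
      _ ≤ ∑ k ∈ range N, Fn s (x 0 - x k) := by
          apply Finset.sum_le_sum
          intro k hk
          rw [mem_range] at hk
          rcases Nat.eq_zero_or_pos k with rfl | hk1
          · rw [sub_self, Fn_zero]; linarith
          · have hd : (1:ℝ) ≤ ((k-0:ℕ):ℝ) := by exact_mod_cast (by omega : 1 ≤ k - 0)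
            have hA := hchain k (by omega) 0 (by omega)
            have hApos : 0 < x k - x 0 := by nlinarith
            have hx : x 0 - x k = -(x k - x 0) := by ring
            rw [hx, Fn_neg s hApos, neg_le_neg_iff]
            exact Real.rpow_le_rpow_of_nonpos hg (by nlinarith) (by linarith)
  linarith

lemma neg_before {f : ℝ → ℝ} {T c : ℝ} (hf : HasDerivAt f c T) (hc : 0 < c)
    (hfT : f T = 0) (h1 : 1 < T) : ∃ u, 1 < u ∧ u < T ∧ f u < 0 := by
  have hs := hasDerivAt_iff_tendsto_slope.1 hf
  have hs' : Filter.Tendsto (slope f T) (nhdsWithin T (Set.Iio T)) (nhds c) :=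
    hs.mono_left (nhdsWithin_mono T (fun u hu => Set.mem_compl_singleton_iff.2 (ne_of_lt hu)))
  have hev : ∀ᶠ u in nhdsWithin T (Set.Iio T), 0 < slope f T u :=
    hs' (isOpen_Ioi.mem_nhds hc)
  have hev2 : ∀ᶠ u in nhdsWithin T (Set.Iio T), 1 < u := by
    apply Filter.eventually_of_mem (U := Set.Ioi 1)
    · exact nhdsWithin_le_nhds (isOpen_Ioi.mem_nhds h1)
    · exact fun u hu => hu
  have hev3 : ∀ᶠ u in nhdsWithin T (Set.Iio T), u < T :=
    Filter.eventually_of_mem self_mem_nhdsWithin (fun u hu => hu)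
  have : ∃ u, (0 < slope f T u ∧ 1 < u) ∧ u < T := by
    have := ((hev.and hev2).and hev3)
    exact this.exists
  obtain ⟨u, ⟨hsl, hu1⟩, huT⟩ := this
  refine ⟨u, hu1, huT, ?_⟩
  rw [slope_def_field, hfT, sub_zero, div_pos_iff] at hsl
  rcases hsl with ⟨_, h⟩ | ⟨hn, _⟩
  · linarith
  · linarith

set_option maxHeartbeats 1000000 in
/-- Preservation of ordering and two-sided growth rate `t^{1/(1+2s)}` for the gaps of a
`C¹` solution of the repulsive dislocation dynamical system on `[1,∞)`. -/
theorem stmt_3 (N : ℕ) (hN : 2 ≤ N) (s γ : ℝ) (hs0 : 0 < s) (hs1 : s < 1) (hγ : 0 < γ)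
    (η : Fin N → ℝ → ℝ)
    (hC1 : ∀ i, ContinuousOn (η i) (Set.Ici 1) ∧ ContinuousOn (deriv (η i)) (Set.Ici 1))
    (hode : ∀ i : Fin N, ∀ t > (1:ℝ), HasDerivAt (η i)
      ((γ / (2*s)) * ∑ j ∈ Finset.univ.erase i,
        (η i t - η j t) / |η i t - η j t| ^ (1 + 2*s)) t)
    (hinit : StrictMono (fun i => η i 1)) :
    (∀ t ≥ (1:ℝ), StrictMono (fun i => η i t)) ∧
    ∃ C : ℝ, 1 ≤ C ∧ ∀ t ≥ (1:ℝ), ∀ i j : Fin N, (i : ℕ) + 1 = (j : ℕ) →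
      (1/C) * t ^ (1/(1 + 2*s)) ≤ η j t - η i t ∧
      η j t - η i t ≤ C * t ^ (1/(1 + 2*s)) := by
  have h2s : (0:ℝ) < 2*s := by linarith
  have h12s : (0:ℝ) < 1 + 2*s := by linarith
  set e : ℝ := 1/(1+2*s) with he
  have he0 : 0 < e := by positivity
  have he1 : e < 1 := by rw [he, div_lt_one h12s]; linarith
  haveI hNe : Nonempty (Fin (N-1)) := ⟨⟨0, by omega⟩⟩
  set gap : Fin (N-1) → ℝ → ℝ := fun k t =>
    η ⟨k.val+1, by have := k.isLt; omega⟩ t - η ⟨k.val, by have := k.isLt; omega⟩ t with hgapdef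
  have hgapcont : ∀ k, ContinuousOn (gap k) (Set.Ici 1) := fun k => ((hC1 _).1).sub ((hC1 _).1)
  obtain ⟨m₁, hm₁pos, hm₁le⟩ : ∃ m : ℝ, 0 < m ∧ ∀ k : Fin (N-1), m ≤ gap k 1 := by
    refine ⟨Finset.univ.inf' Finset.univ_nonempty (fun k => gap k 1), ?_, ?_⟩
    · rw [Finset.lt_inf'_iff]
      intro k _
      simp only [hgapdef]
      exact sub_pos.2 (hinit (show (⟨k.val, by have := k.isLt; omega⟩ : Fin N)
        < ⟨k.val+1, by have := k.isLt; omega⟩ from Fin.mk_lt_mk.2 (Nat.lt_succ_self _)))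
    · intro k
      exact Finset.inf'_le _ (Finset.mem_univ k)
  set a : ℝ := (m₁/2) ^ (1+2*s) with ha
  have hapos : 0 < a := Real.rpow_pos_of_pos (by linarith) _
  have hNR : (0:ℝ) < (N:ℝ) := by exact_mod_cast (by omega : 0 < N)
  set b : ℝ := γ/s * (N:ℝ)^(-(2*s)) with hb
  have hbpos : 0 < b := mul_pos (div_pos hγ hs0) (Real.rpow_pos_of_pos hNR _)
  set φ : ℝ → ℝ := fun t => (a + b*(t-1)) ^ e with hφ
  have hbase : ∀ t, 1 ≤ t → 0 < a + b*(t-1) := by intro t ht; nlinarith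
  have hφpos : ∀ t, 1 ≤ t → 0 < φ t := fun t ht => Real.rpow_pos_of_pos (hbase t ht) _
  have hφ1 : φ 1 = m₁/2 := by
    simp only [hφ]
    norm_num
    rw [ha, he, one_div, Real.rpow_rpow_inv (by linarith) (ne_of_gt h12s)]
  have hφcont : ContinuousOn φ (Set.Ici 1) := by
    apply ContinuousOn.rpow_const
    · exact (continuous_const.add (continuous_const.mul
        (continuous_id.sub continuous_const))).continuousOn
    · exact fun t _ => Or.inr he0.le
  have hφderiv : ∀ t, 1 ≤ t → HasDerivAt φ (b * e * (a + b*(t-1))^(e-1)) t := by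
    intro t ht
    have hin : HasDerivAt (fun u : ℝ => a + b*(u-1)) b t := by
      simpa using (((hasDerivAt_id t).sub_const 1).const_mul b).const_add a
    exact hin.rpow_const (Or.inl (hbase t ht).ne')
  have hφe : ∀ t, 1 ≤ t → (a + b*(t-1))^(e-1) = (φ t)^(-(2*s)) := by
    intro t ht
    simp only [hφ]
    rw [← Real.rpow_mul (hbase t ht).le]
    congr 1
    rw [he]; field_simp; ring
  -- auxiliary coordinates
  set xfun : ℝ → ℕ → ℝ := fun t m => if h : m < N then η ⟨m, h⟩ t else 0 with hxfun
  have hxeq : ∀ t, ∀ i : Fin N, xfun t i.val = η i t := by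
    intro t i
    simp only [hxfun, dif_pos i.isLt]
  have hsum : ∀ t, ∀ i : Fin N, ∑ j ∈ Finset.univ.erase i, Fn s (η i t - η j t)
      = ∑ j ∈ range N, Fn s (xfun t i.val - xfun t j) := by
    intro t i
    rw [Finset.sum_erase _ (by rw [sub_self, Fn_zero])]
    rw [← Fin.sum_univ_eq_sum_range (fun j => Fn s (xfun t i.val - xfun t j)) N]
    apply Finset.sum_congr rfl
    intro j _
    rw [hxeq t i, hxeq t j]
  -- Part 1 : lower bound of gaps by φ
  have hlow : ∀ t, 1 ≤ t → ∀ k : Fin (N-1), φ t ≤ gap k t := by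
    by_contra hcon
    push_neg at hcon
    obtain ⟨t₀, ht₀, k₀, hk₀⟩ := hcon
    set B : Set ℝ := {t : ℝ | 1 ≤ t ∧ ∃ k : Fin (N-1), gap k t < φ t} with hB
    have hBne : B.Nonempty := ⟨t₀, ht₀, k₀, hk₀⟩
    have hbdd : BddBelow B := ⟨1, fun u hu => hu.1⟩
    set T : ℝ := sInf B with hT
    have hT1 : 1 ≤ T := le_csInf hBne (fun u hu => hu.1)
    have hTle : ∀ u ∈ B, T ≤ u := fun u hu => csInf_le hbdd hu
    have hgood : ∀ u, 1 ≤ u → u < T → ∀ k, φ u ≤ gap k u := by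
      intro u h1 hu k
      by_contra hneg
      push_neg at hneg
      exact absurd (hTle u ⟨h1, k, hneg⟩) (by linarith)
    have hTgood : ∀ k, φ T ≤ gap k T := by
      intro k
      rcases eq_or_lt_of_le hT1 with h1T | h1T
      · rw [← h1T, hφ1]
        exact le_trans (by linarith) (hm₁le k)
      · have hc : ContinuousWithinAt (fun u => gap k u - φ u) (Set.Ico 1 T) T := by
          apply (((hgapcont k).sub hφcont) T (Set.mem_Ici.2 hT1)).mono
          exact fun u hu => Set.mem_Ici.2 hu.1
        have hne : (nhdsWithin T (Set.Ico 1 T)).NeBot := by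
          rw [← mem_closure_iff_nhdsWithin_neBot, closure_Ico (ne_of_lt h1T)]
          exact ⟨hT1, le_rfl⟩
        have hev : ∀ᶠ u in nhdsWithin T (Set.Ico 1 T), 0 ≤ gap k u - φ u :=
          Filter.eventually_of_mem self_mem_nhdsWithin
            (fun u hu => sub_nonneg.2 (hgood u hu.1 hu.2 k))
        have h9 := ge_of_tendsto hc hev
        simp only at h9
        linarith
    by_cases hstrict : ∀ k, φ T < gap k T
    · have hev : ∀ᶠ u in nhdsWithin T (Set.Ici 1), ∀ k, φ u < gap k u := by
        rw [Filter.eventually_all]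
        intro k
        have hc : ContinuousWithinAt (fun u => gap k u - φ u) (Set.Ici 1) T :=
          ((hgapcont k).sub hφcont) T (Set.mem_Ici.2 hT1)
        have hm := hc (isOpen_Ioi.mem_nhds (sub_pos.2 (hstrict k)))
        filter_upwards [hm] with u hu
        exact sub_pos.1 hu
      obtain ⟨ε, hε, hsub⟩ := Metric.mem_nhdsWithin_iff.1 hev
      have hlb : ∀ u ∈ B, T + ε ≤ u := by
        intro u hu
        by_contra hlt
        push_neg at hlt
        have hu1 : 1 ≤ u := hu.1
        have huT : T ≤ u := hTle u hu
        have hmem : u ∈ Metric.ball T ε ∩ Set.Ici 1 := by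
          constructor
          · rw [Metric.mem_ball, Real.dist_eq, abs_of_nonneg (by linarith)]; linarith
          · exact hu1
        have hgoodu := hsub hmem
        obtain ⟨_, k, hk⟩ := hu
        exact absurd (hgoodu k) (not_lt.2 hk.le)
      have hfin := le_csInf hBne hlb
      rw [← hT] at hfin
      linarith
    · push_neg at hstrict
      obtain ⟨k, hk⟩ := hstrict
      have heqc : gap k T = φ T := le_antisymm hk (hTgood k)
      have hT1' : 1 < T := by
        rcases eq_or_lt_of_le hT1 with h1T | h1T
        · exfalso
          rw [← h1T, hφ1] at heqc
          have h9 := hm₁le k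
          rw [heqc] at h9
          linarith
        · exact h1T
      have hkN : k.val + 1 < N := by have := k.isLt; omega
      have hgapx : ∀ m : ℕ, m + 1 < N → φ T ≤ xfun T (m+1) - xfun T m := by
        intro m hm
        have h2 := hTgood ⟨m, by omega⟩
        simp only [hgapdef] at h2
        simp only [hxfun, dif_pos hm, dif_pos (show m < N by omega)]
        exact h2
      have heqx : xfun T (k.val+1) - xfun T k.val = φ T := by
        simp only [hgapdef] at heqc
        simp only [hxfun, dif_pos hkN, dif_pos (show k.val < N by omega)]
        exact heqc
      have hcore := core_sum hs0 (xfun T) (hφpos T hT1) hkN hgapx heqx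
      set i1 : Fin N := ⟨k.val + 1, hkN⟩ with hi1
      set i0 : Fin N := ⟨k.val, by omega⟩ with hi0
      have hdg : HasDerivAt (gap k)
          ((γ / (2*s)) * ∑ j ∈ Finset.univ.erase i1, Fn s (η i1 T - η j T)
            - (γ / (2*s)) * ∑ j ∈ Finset.univ.erase i0, Fn s (η i0 T - η j T)) T := by
        simp only [hgapdef]
        exact (hode i1 T hT1').sub (hode i0 T hT1')
      have hval : b * (φ T)^(-(2*s)) ≤
          (γ / (2*s)) * ∑ j ∈ Finset.univ.erase i1, Fn s (η i1 T - η j T)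
            - (γ / (2*s)) * ∑ j ∈ Finset.univ.erase i0, Fn s (η i0 T - η j T) := by
        rw [hsum T i1, hsum T i0, ← mul_sub, ← Finset.sum_sub_distrib]
        have hbeq : b * (φ T)^(-(2*s))
            = (γ/(2*s)) * (2 * (N:ℝ)^(-(2*s)) * (φ T)^(-(2*s))) := by
          rw [hb]; field_simp
        rw [hbeq]
        exact mul_le_mul_of_nonneg_left hcore (by positivity)
      have hφd := hφderiv T hT1
      have hφd' : b * e * (a + b*(T-1))^(e-1) < b * (φ T)^(-(2*s)) := by
        rw [hφe T hT1]
        have h3 : 0 < (φ T)^(-(2*s)) := Real.rpow_pos_of_pos (hφpos T hT1) _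
        have h4 := mul_lt_mul_of_pos_right (mul_lt_mul_of_pos_left he1 hbpos) h3
        rw [mul_one] at h4
        exact h4
      have hdd : HasDerivAt (fun u => gap k u - φ u)
          (((γ / (2*s)) * ∑ j ∈ Finset.univ.erase i1, Fn s (η i1 T - η j T)
            - (γ / (2*s)) * ∑ j ∈ Finset.univ.erase i0, Fn s (η i0 T - η j T))
            - b * e * (a + b*(T-1))^(e-1)) T := hdg.sub hφd
      obtain ⟨u, hu1, huT, hneg⟩ := neg_before hdd (by linarith)
        (by rw [sub_eq_zero]; exact heqc) hT1'
      have := hgood u hu1.le huT k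
      linarith
  -- chain estimates at every time
  have hlowx : ∀ t, 1 ≤ t → ∀ m : ℕ, m + 1 < N → φ t ≤ xfun t (m+1) - xfun t m := by
    intro t ht m hm
    have h2 := hlow t ht ⟨m, by omega⟩
    simp only [hgapdef] at h2
    simp only [hxfun, dif_pos hm, dif_pos (show m < N by omega)]
    exact h2
  have hchain : ∀ t, 1 ≤ t → ∀ j, j < N → ∀ i, i ≤ j →
      ((j - i : ℕ) : ℝ) * φ t ≤ xfun t j - xfun t i :=
    fun t ht => chain (xfun t) (hφpos t ht).le (hlowx t ht)
  -- ordering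
  have horder : ∀ t ≥ (1:ℝ), StrictMono (fun i => η i t) := by
    intro t ht i j hij
    have hij' : i.val < j.val := hij
    have h2 := hchain t ht j.val j.isLt i.val (by omega)
    rw [hxeq t i, hxeq t j] at h2
    have h3 : (1:ℝ) ≤ ((j.val - i.val : ℕ):ℝ) := by exact_mod_cast (by omega : 1 ≤ j.val - i.val)
    have := hφpos t ht
    simp only
    nlinarith
  refine ⟨horder, ?_⟩
  -- Part 2 : upper bound
  set iN : Fin N := ⟨N-1, by omega⟩ with hiN
  set iz : Fin N := ⟨0, by omega⟩ with hiz
  set D : ℝ → ℝ := fun t => η iN t - η iz t with hD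
  have hD1pos : 0 < D 1 := by
    simp only [hD]
    exact sub_pos.2 (hinit (Fin.mk_lt_mk.2 (by omega)))
  set K : ℝ := γ/s * N * (1+2*s) / b with hK
  have hKpos : 0 < K := by
    apply div_pos _ hbpos
    positivity
  have hΨd : ∀ t, 1 ≤ t → HasDerivAt (fun u => D 1 + K * (φ u - a^e))
      (K * (b * e * (a + b*(t-1))^(e-1))) t := by
    intro t ht
    exact ((((hφderiv t ht).sub_const (a^e)).const_mul K).const_add (D 1))
  have hDd : ∀ t, 1 < t → HasDerivAt D
      ((γ / (2*s)) * ∑ j ∈ Finset.univ.erase iN, Fn s (η iN t - η j t)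
        - (γ / (2*s)) * ∑ j ∈ Finset.univ.erase iz, Fn s (η iz t - η j t)) t := by
    intro t ht
    simp only [hD]
    exact (hode iN t ht).sub (hode iz t ht)
  have hVle : ∀ t, 1 < t →
      (γ / (2*s)) * ∑ j ∈ Finset.univ.erase iN, Fn s (η iN t - η j t)
        - (γ / (2*s)) * ∑ j ∈ Finset.univ.erase iz, Fn s (η iz t - η j t)
      ≤ K * (b * e * (a + b*(t-1))^(e-1)) := by
    intro t ht
    have hup := upper_sum hs0 (xfun t) (hφpos t ht.le) hN (hlowx t ht.le)
    rw [hsum t iN, hsum t iz, ← mul_sub]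
    have hKe : K * (b * e * (a + b*(t-1))^(e-1)) = (γ/(2*s)) * (2 * N * (φ t)^(-(2*s))) := by
      rw [hφe t ht.le, hK, he]
      field_simp
    rw [hKe]
    have hiNv : iN.val = N - 1 := rfl
    have hizv : iz.val = 0 := rfl
    rw [hiNv, hizv]
    exact mul_le_mul_of_nonneg_left hup (by positivity)
  have hanti : AntitoneOn (fun t => D t - (D 1 + K * (φ t - a^e))) (Set.Ici 1) := by
    apply antitoneOn_of_deriv_nonpos (convex_Ici 1)
    · apply ContinuousOn.sub
      · exact ((hC1 iN).1).sub ((hC1 iz).1)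
      · exact continuousOn_const.add ((continuousOn_const.mul
          (hφcont.sub continuousOn_const)))
    · intro t ht
      rw [interior_Ici] at ht
      exact ((hDd t ht).sub (hΨd t (le_of_lt ht))).differentiableAt.differentiableWithinAt
    · intro t ht
      rw [interior_Ici] at ht
      rw [HasDerivAt.deriv (f := fun t => D t - (D 1 + K * (φ t - a ^ e))) ((hDd t ht).sub (hΨd t (le_of_lt ht)))]
      have := hVle t ht
      linarith
  have hφ1e : φ 1 = a ^ e := by
    simp only [hφ]; norm_num
  have hDle : ∀ t, 1 ≤ t → D t ≤ D 1 + K * (φ t - a^e) := by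
    intro t ht
    have h2 := hanti (Set.mem_Ici.2 le_rfl) (Set.mem_Ici.2 ht) ht
    simp only at h2
    rw [hφ1e] at h2
    simp only [sub_self, mul_zero, add_zero] at h2
    linarith
  -- final constants
  set m' : ℝ := min a b with hm'
  set M : ℝ := max a b with hM
  have hm'pos : 0 < m' := lt_min hapos hbpos
  have hMpos : 0 < M := lt_of_lt_of_le hapos (le_max_left _ _)
  have hφlb : ∀ t, 1 ≤ t → m'^e * t^e ≤ φ t := by
    intro t ht
    have hb1 : m' * t ≤ a + b*(t-1) := by
      have h1 : m' ≤ a := min_le_left _ _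
      have h2 : m' ≤ b := min_le_right _ _
      nlinarith
    have := Real.rpow_le_rpow (by positivity) hb1 he0.le
    rwa [Real.mul_rpow hm'pos.le (by linarith)] at this
  have hφub : ∀ t, 1 ≤ t → φ t ≤ M^e * t^e := by
    intro t ht
    have hb1 : a + b*(t-1) ≤ M * t := by
      have h1 : a ≤ M := le_max_left _ _
      have h2 : b ≤ M := le_max_right _ _
      nlinarith
    have := Real.rpow_le_rpow (hbase t ht).le hb1 he0.le
    rwa [Real.mul_rpow hMpos.le (by linarith)] at this
  set cup : ℝ := D 1 + K * M^e with hcup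
  set C : ℝ := max (max 1 cup) (1/(m'^e)) with hC
  have hmepos : 0 < m'^e := Real.rpow_pos_of_pos hm'pos _
  have hC1' : 1 ≤ C := le_trans (le_max_left 1 cup) (le_max_left _ _)
  have hCpos : 0 < C := by linarith
  refine ⟨C, hC1', ?_⟩
  intro t ht i j hij
  have hjN : j.val < N := j.isLt
  have hij1 : i.val + 1 < N := by omega
  have hte : (0:ℝ) ≤ t^e := Real.rpow_nonneg (by linarith) _
  have hte1 : 1 ≤ t^e := by
    calc (1:ℝ) = 1^e := (Real.one_rpow e).symm
      _ ≤ t^e := Real.rpow_le_rpow (by norm_num) ht he0.le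
  have hgapij : φ t ≤ η j t - η i t := by
    have h2 := hchain t ht j.val j.isLt i.val (by omega)
    rw [hxeq t i, hxeq t j] at h2
    have h3 : ((j.val - i.val : ℕ):ℝ) = 1 := by
      rw [show j.val - i.val = 1 by omega]; norm_num
    rw [h3, one_mul] at h2
    exact h2
  constructor
  · -- lower bound
    have h1C : 1/C ≤ m'^e := by
      have h2 : 1/(m'^e) ≤ C := le_trans (le_max_right _ _) le_rfl |>.trans (le_refl C) |>.trans le_rfl
      have h2' : 1/(m'^e) ≤ C := le_max_right _ _
      have := one_div_le_one_div_of_le (by positivity) h2'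
      rwa [one_div_one_div] at this
    calc (1/C) * t^(1/(1+2*s)) ≤ m'^e * t^e := by
          rw [← he]
          exact mul_le_mul_of_nonneg_right h1C hte
      _ ≤ φ t := hφlb t ht
      _ ≤ η j t - η i t := hgapij
  · -- upper bound
    have hjle : η j t ≤ η iN t := by
      rcases eq_or_lt_of_le (show j.val ≤ N-1 by omega) with hjv | hjv
      · have : j = iN := Fin.ext (by rw [hjv])
        rw [this]
      · have h2 := hchain t ht (N-1) (by omega) j.val (by omega)
        rw [hxeq t j] at h2
        have h3 : xfun t (N-1) = η iN t := hxeq t iN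
        rw [h3] at h2
        have h4 : (0:ℝ) ≤ ((N-1-j.val : ℕ):ℝ) * φ t :=
          mul_nonneg (Nat.cast_nonneg _) (hφpos t ht).le
        linarith
    have hile : η iz t ≤ η i t := by
      rcases Nat.eq_zero_or_pos i.val with hiv | hiv
      · have : i = iz := Fin.ext (by rw [hiv])
        rw [this]
      · have h2 := hchain t ht i.val i.isLt 0 (by omega)
        rw [hxeq t i] at h2
        have h3 : xfun t 0 = η iz t := hxeq t iz
        rw [h3] at h2
        have h4 : (0:ℝ) ≤ ((i.val - 0 : ℕ):ℝ) * φ t :=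
          mul_nonneg (Nat.cast_nonneg _) (hφpos t ht).le
        linarith
    have hDt : η j t - η i t ≤ D t := by
      simp only [hD]
      linarith
    have h5 := hDle t ht
    have h6 : φ t ≤ M^e * t^e := hφub t ht
    have h7 : D 1 ≤ D 1 * t^e := by nlinarith
    have h8 : 0 < a ^ e := Real.rpow_pos_of_pos hapos _
    calc η j t - η i t ≤ D t := hDt
      _ ≤ D 1 + K * (φ t - a^e) := h5
      _ ≤ D 1 * t^e + K * (M^e * t^e) := by
          have h10 : φ t - a^e ≤ M^e * t^e := by linarith
          have h11 := mul_le_mul_of_nonneg_left h10 hKpos.le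
          linarith
      _ = cup * t^e := by rw [hcup]; ring
      _ ≤ C * t^(1/(1+2*s)) := by
          rw [← he]
          have h9 : cup ≤ C := le_trans (le_max_right 1 cup) (le_max_left _ _)
          exact mul_le_mul_of_nonneg_right h9 hte
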